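/- arXiv:2005.08190 — 2 statements merged into one kernel-verified Lean document; each statement's English description precedes it below -/
import Mathlib

section
/- Let i_T ≥ 1 and j_L ≥ 1, and let (i,j) satisfy i_T + 1 < i ≤ m and j_L + 1 < j ≤ n. Suppose a_{i′} = a_i for all i_T ≤ i′ ≤ i and b_{j′} = b_j for all j_L ≤ j′ ≤ j. Set s = j − j_L and t = i − i_T. Then D[i,j] = D[i_T + max(t − s, 0), j_L + max(s − t, 0)] + min(s, t) · (a_i − b_j)^2. -/
/-- The DTW dynamic programming table recurrence for sequences `a` (length `m`)
and `b` (length `n`), both indexed from 1. -/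
def DTWTable (a b : ℕ → ℝ) (m n : ℕ) (D : ℕ → ℕ → ℝ) : Prop :=
  D 1 1 = (a 1 - b 1) ^ 2 ∧
  (∀ i, 1 < i → i ≤ m → D i 1 = D (i - 1) 1 + (a i - b 1) ^ 2) ∧
  (∀ j, 1 < j → j ≤ n → D 1 j = D 1 (j - 1) + (a 1 - b j) ^ 2) ∧
  (∀ i j, 1 < i → i ≤ m → 1 < j → j ≤ n →
    D i j = min (min (D i (j - 1)) (D (i - 1) j)) (D (i - 1) (j - 1)) + (a i - b j) ^ 2)

/-!
If `a (i + 1) = a i`, row `i + 1` of the table dominates row `i`: along the row, every step into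
row `i + 1` costs exactly what the same step into row `i` costs. Columns behave the same way.
Inside a block where `a` and `b` are constant, the diagonal predecessor is therefore the minimum
in the recurrence, so each diagonal step adds exactly `(a i - b j) ^ 2`, and walking back
`min s t` steps along the diagonal from `(i, j)` reaches the edge of the block.
-/

namespace DTWTable

variable {a b : ℕ → ℝ} {m n : ℕ} {D : ℕ → ℕ → ℝ}

theorem transpose (hD : DTWTable a b m n D) : DTWTable b a n m (fun j i => D i j) := by
  obtain ⟨h11, hcol, hrow, hrec⟩ := hD
  refine ⟨?_, fun j hj hjn => ?_, fun i hi him => ?_, fun j i hj hjn hi him => ?_⟩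
  all_goals dsimp only
  · rw [h11, sub_sq_comm]
  · rw [hrow j hj hjn, sub_sq_comm]
  · rw [hcol i hi him, sub_sq_comm]
  · rw [hrec i j hi him hj hjn, min_comm (D (i - 1) j), sub_sq_comm]

theorem succ_one (hD : DTWTable a b m n D) {i : ℕ} (hi : 1 ≤ i) (him : i + 1 ≤ m) :
    D (i + 1) 1 = D i 1 + (a (i + 1) - b 1) ^ 2 :=
  hD.2.1 (i + 1) (by omega) him

theorem one_succ (hD : DTWTable a b m n D) {j : ℕ} (hj : 1 ≤ j) (hjn : j + 1 ≤ n) :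
    D 1 (j + 1) = D 1 j + (a 1 - b (j + 1)) ^ 2 :=
  hD.2.2.1 (j + 1) (by omega) hjn

theorem succ_succ (hD : DTWTable a b m n D) {i j : ℕ} (hi : 1 ≤ i) (him : i + 1 ≤ m)
    (hj : 1 ≤ j) (hjn : j + 1 ≤ n) :
    D (i + 1) (j + 1) =
      min (min (D (i + 1) j) (D i (j + 1))) (D i j) + (a (i + 1) - b (j + 1)) ^ 2 :=
  hD.2.2.2 (i + 1) (j + 1) (by omega) him (by omega) hjn

theorem succ_snd_le_add (hD : DTWTable a b m n D) {i j : ℕ} (hi : 1 ≤ i) (him : i ≤ m)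
    (hj : 1 ≤ j) (hjn : j + 1 ≤ n) :
    D i (j + 1) ≤ D i j + (a i - b (j + 1)) ^ 2 := by
  obtain rfl | hi := hi.eq_or_lt
  · exact (hD.one_succ hj hjn).le
  · have h := hD.2.2.2 i (j + 1) hi him (by omega) hjn
    rw [Nat.add_sub_cancel] at h
    rw [h]
    gcongr
    exact (min_le_left _ _).trans (min_le_left _ _)

theorem le_succ_fst_of_eq (hD : DTWTable a b m n D) {i : ℕ} (hi : 1 ≤ i) (him : i + 1 ≤ m)
    (ha : a (i + 1) = a i) {j : ℕ} (hj : 1 ≤ j) (hjn : j ≤ n) : D i j ≤ D (i + 1) j := by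
  induction j, hj using Nat.le_induction with
  | base =>
    rw [hD.succ_one hi him]
    exact le_add_of_nonneg_right (sq_nonneg _)
  | succ j hj ih =>
    rw [hD.succ_succ hi him hj hjn, ha]
    have h_step := hD.succ_snd_le_add hi (by omega) hj hjn
    rw [← min_add_add_right, ← min_add_add_right]
    refine le_min (le_min ?_ ?_) h_step
    · exact h_step.trans (by gcongr; exact ih (by omega))
    · exact le_add_of_nonneg_right (sq_nonneg _)

theorem le_succ_snd_of_eq (hD : DTWTable a b m n D) {j : ℕ} (hj : 1 ≤ j) (hjn : j + 1 ≤ n)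
    (hb : b (j + 1) = b j) {i : ℕ} (hi : 1 ≤ i) (him : i ≤ m) : D i j ≤ D i (j + 1) :=
  hD.transpose.le_succ_fst_of_eq hj hjn hb hi him

theorem succ_succ_eq_of_eq (hD : DTWTable a b m n D) {i j : ℕ} (hi : 1 ≤ i) (him : i + 1 ≤ m)
    (hj : 1 ≤ j) (hjn : j + 1 ≤ n) (ha : a (i + 1) = a i) (hb : b (j + 1) = b j) :
    D (i + 1) (j + 1) = D i j + (a (i + 1) - b (j + 1)) ^ 2 := by
  have h_fst := hD.le_succ_fst_of_eq hi him ha hj (by omega)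
  have h_snd := hD.le_succ_snd_of_eq hj hjn hb hi (by omega)
  rw [hD.succ_succ hi him hj hjn, min_eq_right (le_min h_fst h_snd)]

theorem add_add_eq_of_forall_eq (hD : DTWTable a b m n D) {i j k : ℕ} (hi : 1 ≤ i)
    (him : i + k ≤ m) (hj : 1 ≤ j) (hjn : j + k ≤ n) (ha : ∀ l ≤ k, a (i + l) = a i)
    (hb : ∀ l ≤ k, b (j + l) = b j) :
    D (i + k) (j + k) = D i j + k * (a i - b j) ^ 2 := by
  induction k with
  | zero => simp
  | succ k ih =>
    have ha_last : a (i + k + 1) = a i := ha (k + 1) le_rfl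
    have hb_last : b (j + k + 1) = b j := hb (k + 1) le_rfl
    have h_diag := hD.succ_succ_eq_of_eq (i := i + k) (j := j + k) (by omega) (by omega)
      (by omega) (by omega) (ha_last.trans (ha k (by omega)).symm)
      (hb_last.trans (hb k (by omega)).symm)
    rw [← add_assoc, ← add_assoc, h_diag, ha_last, hb_last,
      ih (by omega) (by omega) (fun l hl => ha l (by omega)) (fun l hl => hb l (by omega))]
    push_cast
    ring

end DTWTable

theorem stmt_6_general (a b : ℕ → ℝ) (m n : ℕ)
    (D : ℕ → ℕ → ℝ) (hD : DTWTable a b m n D)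
    (iT jL i j : ℕ) (hiT : 1 ≤ iT) (hjL : 1 ≤ jL)
    (hi₁ : iT + 1 < i) (hi₂ : i ≤ m) (hj₁ : jL + 1 < j) (hj₂ : j ≤ n)
    (ha : ∀ i', iT ≤ i' → i' ≤ i → a i' = a i)
    (hb : ∀ j', jL ≤ j' → j' ≤ j → b j' = b j)
    (s t : ℕ) (hs : s = j - jL) (ht : t = i - iT) :
    D i j = D (iT + (t - s)) (jL + (s - t)) + (min s t : ℕ) * (a i - b j) ^ 2 := by
  have hi : iT + (t - s) + min s t = i := by omega
  have hj : jL + (s - t) + min s t = j := by omega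
  have ha_corner : a (iT + (t - s)) = a i := ha _ (by omega) (by omega)
  have hb_corner : b (jL + (s - t)) = b j := hb _ (by omega) (by omega)
  have h_block := hD.add_add_eq_of_forall_eq (k := min s t) (by omega) (by omega) (by omega)
    (by omega) (fun l hl => (ha _ (by omega) (by omega)).trans ha_corner.symm)
    (fun l hl => (hb _ (by omega) (by omega)).trans hb_corner.symm)
  rwa [hi, hj, ha_corner, hb_corner] at h_block

theorem stmt_6 (a b : ℕ → ℝ) (m n : ℕ) (hm : 1 ≤ m) (hn : 1 ≤ n)
    (D : ℕ → ℕ → ℝ) (hD : DTWTable a b m n D)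
    (iT jL i j : ℕ) (hiT : 1 ≤ iT) (hjL : 1 ≤ jL)
    (hi₁ : iT + 1 < i) (hi₂ : i ≤ m) (hj₁ : jL + 1 < j) (hj₂ : j ≤ n)
    (ha : ∀ i', iT ≤ i' → i' ≤ i → a i' = a i)
    (hb : ∀ j', jL ≤ j' → j' ≤ j → b j' = b j)
    (s t : ℕ) (hs : s = j - jL) (ht : t = i - iT) :
    D i j = D (iT + (t - s)) (jL + (s - t)) + (min s t : ℕ) * (a i - b j) ^ 2 :=
  stmt_6_general a b m n D hD iT jL i j hiT hjL hi₁ hi₂ hj₁ hj₂ ha hb s t hs ht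
end

section
/- For every 1 ≤ t ≤ k and every pair (i,j) with 2 ≤ i ≤ m and i < j ≤ n + t − 1, one has D^(t)[i,j+1] − D^(t)[i−1,j+1] ≠ D^(t−1)[i,j] − D^(t−1)[i−1,j]. (Hence each of the k single-character prepend edits changes the values of Ω(mn) vertical-difference entries of the dynamic programming table, for a total of Θ(kmn) changed entries over the k edits.) -/
open Finset

theorem DTWTable.eqOn {a b : ℕ → ℝ} {m n : ℕ} {D D' : ℕ → ℕ → ℝ}
    (hD : DTWTable a b m n D) (hD' : DTWTable a b m n D') {i j : ℕ}
    (hi : 1 ≤ i) (him : i ≤ m) (hj : 1 ≤ j) (hjn : j ≤ n) : D i j = D' i j := by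
  obtain ⟨h11, hcol, hrow, hrec⟩ := hD
  obtain ⟨h11', hcol', hrow', hrec'⟩ := hD'
  induction i, hi using Nat.le_induction generalizing j with
  | base =>
    induction j, hj using Nat.le_induction with
    | base => rw [h11, h11']
    | succ j hj ih =>
      rw [hrow _ (by omega) hjn, hrow' _ (by omega) hjn, Nat.add_sub_cancel, ih (by omega)]
  | succ i hi ih =>
    induction j, hj using Nat.le_induction with
    | base =>
      rw [hcol _ (by omega) him, hcol' _ (by omega) him, Nat.add_sub_cancel,
        ih (by omega) le_rfl (by omega)]
    | succ j hj ihj =>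
      rw [hrec _ _ (by omega) him (by omega) hjn, hrec' _ _ (by omega) him (by omega) hjn,
        Nat.add_sub_cancel, Nat.add_sub_cancel, ihj (by omega), ih (by omega) (by omega) hjn,
        ih (by omega) hj (by omega)]

/-- Cost of the warping path that runs down the diagonal from `(1, 1)` to `(min i j, min i j)`
and then straight to `(i, j)`. -/
noncomputable def diagPathCost (a b : ℕ → ℝ) (i j : ℕ) : ℝ :=
  ∑ l ∈ Icc 1 (max i j), (a (min i l) - b (min j l)) ^ 2

section diagPathCost

variable (a b : ℕ → ℝ) {i j : ℕ}

lemma diagPathCost_add_one_right (h : i ≤ j) :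
    diagPathCost a b i (j + 1) = diagPathCost a b i j + (a i - b (j + 1)) ^ 2 := by
  rw [diagPathCost, diagPathCost, max_eq_right (by omega), max_eq_right h,
    sum_Icc_succ_top (by omega), min_eq_left (show i ≤ j + 1 by omega), min_self]
  congr 1
  refine sum_congr rfl fun l hl => ?_
  rw [mem_Icc] at hl
  rw [min_eq_right (show l ≤ j + 1 by omega), min_eq_right hl.2]

lemma diagPathCost_add_one_left (h : j ≤ i) :
    diagPathCost a b (i + 1) j = diagPathCost a b i j + (a (i + 1) - b j) ^ 2 := by
  rw [diagPathCost, diagPathCost, max_eq_left (by omega), max_eq_left h,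
    sum_Icc_succ_top (by omega), min_eq_left (show j ≤ i + 1 by omega), min_self]
  congr 1
  refine sum_congr rfl fun l hl => ?_
  rw [mem_Icc] at hl
  rw [min_eq_right (show l ≤ i + 1 by omega), min_eq_right hl.2]

lemma diagPathCost_add_one_add_one (i : ℕ) :
    diagPathCost a b (i + 1) (i + 1) = diagPathCost a b i i + (a (i + 1) - b (i + 1)) ^ 2 := by
  simp only [diagPathCost, max_self]
  rw [sum_Icc_succ_top (by omega), min_self]
  congr 1
  refine sum_congr rfl fun l hl => ?_
  rw [mem_Icc] at hl
  rw [min_eq_right (show l ≤ i + 1 by omega), min_eq_right hl.2]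

lemma diagPathCost_add_one_left_sub (h : i + 1 ≤ j) :
    diagPathCost a b (i + 1) j - diagPathCost a b i j =
      ∑ l ∈ Icc (i + 1) j, ((a (i + 1) - b l) ^ 2 - (a i - b l) ^ 2) := by
  induction j, h using Nat.le_induction with
  | base =>
    rw [diagPathCost_add_one_add_one, diagPathCost_add_one_right _ _ le_rfl,
      Icc_self, sum_singleton]
    ring
  | succ j hj ih =>
    rw [diagPathCost_add_one_right _ _ hj, diagPathCost_add_one_right _ _ (by omega),
      sum_Icc_succ_top (by omega), ← ih]
    ring

lemma diagPathCost_add_one_left_sub_shift {b' : ℕ → ℝ} (hb : ∀ l, b' (l + 1) = b l)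
    (h : i + 1 ≤ j) :
    diagPathCost a b' (i + 1) (j + 1) - diagPathCost a b' i (j + 1) =
      diagPathCost a b (i + 1) j - diagPathCost a b i j +
        ((a (i + 1) - b i) ^ 2 - (a i - b i) ^ 2) := by
  rw [diagPathCost_add_one_left_sub _ _ (by omega), diagPathCost_add_one_left_sub _ _ h,
    ← map_add_right_Icc, sum_map]
  simp only [addRightEmbedding_apply, hb]
  rw [← insert_Icc_add_one_left_eq_Icc (by omega), sum_insert (by simp)]
  ring

variable {a b} {m n : ℕ} (ha : AntitoneOn a (Set.Icc 1 m)) (hb : MonotoneOn b (Set.Icc 1 n))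
  (hba : b n ≤ a m)
include ha hb hba

lemma le_of_monotoneOn_of_antitoneOn {l : ℕ} (hi : i ∈ Set.Icc 1 m) (hl : l ∈ Set.Icc 1 n) :
    b l ≤ a i :=
  (hb hl ⟨hl.1.trans hl.2, le_rfl⟩ hl.2).trans
    (hba.trans (ha hi ⟨hi.1.trans hi.2, le_rfl⟩ hi.2))

lemma diagPathCost_add_one_left_le (hi : 1 ≤ i) (him : i + 1 ≤ m) (hij : i + 1 ≤ j)
    (hjn : j ≤ n) : diagPathCost a b (i + 1) j ≤ diagPathCost a b i j := by
  rw [diagPathCost, diagPathCost, max_eq_right hij, max_eq_right (by omega)]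
  refine sum_le_sum fun l hl => ?_
  rw [mem_Icc] at hl
  rw [min_eq_right hl.2]
  have hlow : b l ≤ a (min (i + 1) l) :=
    le_of_monotoneOn_of_antitoneOn ha hb hba ⟨by omega, by omega⟩ ⟨hl.1, by omega⟩
  have hanti : a (min (i + 1) l) ≤ a (min i l) :=
    ha ⟨by omega, by omega⟩ ⟨by omega, by omega⟩ (by omega)
  exact pow_le_pow_left₀ (sub_nonneg.2 hlow) (by linarith) 2

lemma diagPathCost_add_one_right_le (hj : 1 ≤ j) (hjn : j + 1 ≤ n) (hji : j + 1 ≤ i)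
    (him : i ≤ m) : diagPathCost a b i (j + 1) ≤ diagPathCost a b i j := by
  rw [diagPathCost, diagPathCost, max_eq_left hji, max_eq_left (by omega)]
  refine sum_le_sum fun l hl => ?_
  rw [mem_Icc] at hl
  rw [min_eq_right hl.2]
  have hlow : b (min (j + 1) l) ≤ a l :=
    le_of_monotoneOn_of_antitoneOn ha hb hba ⟨hl.1, by omega⟩ ⟨by omega, by omega⟩
  have hmono : b (min j l) ≤ b (min (j + 1) l) :=
    hb ⟨by omega, by omega⟩ ⟨by omega, by omega⟩ (by omega)
  exact pow_le_pow_left₀ (sub_nonneg.2 hlow) (by linarith) 2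

theorem dtwTable_diagPathCost : DTWTable a b m n (diagPathCost a b) := by
  refine ⟨by simp [diagPathCost], fun i hi _ => ?_, fun j hj _ => ?_,
    fun i j hi him hj hjn => ?_⟩
  · obtain ⟨i, rfl⟩ : ∃ i', i = i' + 1 := ⟨i - 1, by omega⟩
    rw [Nat.add_sub_cancel, diagPathCost_add_one_left _ _ (by omega)]
  · obtain ⟨j, rfl⟩ : ∃ j', j = j' + 1 := ⟨j - 1, by omega⟩
    rw [Nat.add_sub_cancel, diagPathCost_add_one_right _ _ (by omega)]
  obtain ⟨p, rfl⟩ : ∃ p, i = p + 1 := ⟨i - 1, by omega⟩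
  obtain ⟨q, rfl⟩ : ∃ q, j = q + 1 := ⟨j - 1, by omega⟩
  rw [Nat.add_sub_cancel, Nat.add_sub_cancel]
  -- the minimum is attained at the predecessor of `(p + 1, q + 1)` on its own path
  rcases lt_trichotomy p q with hpq | rfl | hqp
  · have hleft := diagPathCost_add_one_left_le ha hb hba (by omega) him hpq (by omega)
    have hup : diagPathCost a b p q ≤ diagPathCost a b p (q + 1) := by
      rw [diagPathCost_add_one_right _ _ hpq.le]
      exact le_add_of_nonneg_right (sq_nonneg _)
    rw [min_eq_left (hleft.trans hup), min_eq_left hleft, diagPathCost_add_one_right _ _ hpq]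
  · rw [diagPathCost_add_one_left _ _ le_rfl, diagPathCost_add_one_right _ _ le_rfl,
      min_eq_right (le_min (le_add_of_nonneg_right (sq_nonneg _))
        (le_add_of_nonneg_right (sq_nonneg _))), diagPathCost_add_one_add_one]
  · have hup := diagPathCost_add_one_right_le ha hb hba (by omega) hjn hqp (by omega)
    have hleft : diagPathCost a b p q ≤ diagPathCost a b (p + 1) q := by
      rw [diagPathCost_add_one_left _ _ hqp.le]
      exact le_add_of_nonneg_right (sq_nonneg _)
    rw [min_eq_right (hup.trans hleft), min_eq_left hup,
      diagPathCost_add_one_left _ _ hqp]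

end diagPathCost

lemma strictAntiOn_Icc_of_add_one_lt {α : Type*} [Preorder α] {f : ℕ → α} {m : ℕ}
    (h : ∀ i, 1 ≤ i → i < m → f (i + 1) < f i) : StrictAntiOn f (Set.Icc 1 m) :=
  strictAntiOn_of_succ_lt Set.ordConnected_Icc fun i _ hi hi' => by
    simp only [Nat.succ_eq_succ, Nat.succ_eq_add_one, Set.mem_Icc] at hi hi' ⊢
    exact h i hi.1 (by omega)

lemma monotoneOn_Icc_of_le_add_one {α : Type*} [Preorder α] {f : ℕ → α} {n : ℕ}
    (h : ∀ j, 1 ≤ j → j < n → f j ≤ f (j + 1)) : MonotoneOn f (Set.Icc 1 n) :=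
  monotoneOn_of_le_succ Set.ordConnected_Icc fun j _ hj hj' => by
    simp only [Nat.succ_eq_succ, Nat.succ_eq_add_one, Set.mem_Icc] at hj hj' ⊢
    exact h j hj.1 (by omega)

section prependSeq

variable {α : Type*}

/-- The sequence `B^(t) = c_t, …, c_1, b_1, …, b_n`. -/
def prependSeq (b c : ℕ → α) (t : ℕ) : ℕ → α :=
  fun j => if j ≤ t then c (t + 1 - j) else b (j - t)

lemma prependSeq_add_one_add_one (b c : ℕ → α) (t l : ℕ) :
    prependSeq b c (t + 1) (l + 1) = prependSeq b c t l := by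
  simp only [prependSeq, Nat.add_le_add_iff_right, Nat.add_sub_add_right]

lemma prependSeq_add_self (b c : ℕ → α) {n : ℕ} (hn : 1 ≤ n) (t : ℕ) :
    prependSeq b c t (n + t) = b n := by
  simp [prependSeq, show ¬ n + t ≤ t by omega]

lemma monotoneOn_prependSeq [Preorder α] {b c : ℕ → α} {n k t : ℕ}
    (hb : MonotoneOn b (Set.Icc 1 n)) (hc : AntitoneOn c (Set.Icc 1 k)) (hcb : c 1 ≤ b 1) (htk : t ≤ k) :
    MonotoneOn (prependSeq b c t) (Set.Icc 1 (n + t)) := by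
  rintro p ⟨hp, hpn⟩ q ⟨hq, hqn⟩ hpq
  simp only [prependSeq]
  split_ifs with hpt hqt hqt
  · exact hc ⟨by omega, by omega⟩ ⟨by omega, by omega⟩ (by omega)
  · calc c (t + 1 - p) ≤ c 1 := hc ⟨le_rfl, by omega⟩ ⟨by omega, by omega⟩ (by omega)
      _ ≤ b 1 := hcb
      _ ≤ b (q - t) := hb ⟨le_rfl, by omega⟩ ⟨by omega, by omega⟩ (by omega)
  · omega
  · exact hb ⟨by omega, by omega⟩ ⟨by omega, by omega⟩ (by omega)

end prependSeq

theorem stmt_16_general (a b c : ℕ → ℝ) (m n k : ℕ) (hn : 2 ≤ n)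
    (hA : ∀ i, 1 ≤ i → i < m → a (i + 1) < a i)
    (hB : ∀ j, 1 ≤ j → j < n → b j ≤ b (j + 1))
    (hAB : b n < a m)
    (hc : ∀ t, 1 ≤ t → t < k → c (t + 1) < c t)
    (hcb : c 1 < b 1)
    (Dt : ℕ → ℕ → ℕ → ℝ)
    (hDt : ∀ t, t ≤ k →
      DTWTable a (fun j => if j ≤ t then c (t + 1 - j) else b (j - t)) m (n + t) (Dt t)) :
    ∀ t, 1 ≤ t → t ≤ k → ∀ i j, 2 ≤ i → i ≤ m → i < j → j ≤ n + t - 1 →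
      Dt t i (j + 1) - Dt t (i - 1) (j + 1) ≠ Dt (t - 1) i j - Dt (t - 1) (i - 1) j := by
  intro t ht htk i j hi him hij hjt
  have ha := (strictAntiOn_Icc_of_add_one_lt hA).antitoneOn
  have hβ : ∀ s ≤ k, MonotoneOn (prependSeq b c s) (Set.Icc 1 (n + s)) := fun s hs =>
    monotoneOn_prependSeq (monotoneOn_Icc_of_le_add_one hB)
      (strictAntiOn_Icc_of_add_one_lt hc).antitoneOn hcb.le hs
  have hβa : ∀ s, prependSeq b c s (n + s) ≤ a m := fun s =>
    (prependSeq_add_self b c (by omega) s).trans_le hAB.le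
  have hclosed : ∀ s ≤ k, ∀ p q, 1 ≤ p → p ≤ m → 1 ≤ q → q ≤ n + s →
      Dt s p q = diagPathCost a (prependSeq b c s) p q := fun s hs p q hp hpm hq hqn =>
    (hDt s hs : DTWTable a (prependSeq b c s) m (n + s) (Dt s)).eqOn
      (dtwTable_diagPathCost ha (hβ s hs) (hβa s)) hp hpm hq hqn
  obtain ⟨s, rfl⟩ : ∃ s, t = s + 1 := ⟨t - 1, by omega⟩
  obtain ⟨p, rfl⟩ : ∃ p, i = p + 1 := ⟨i - 1, by omega⟩
  simp only [Nat.add_sub_cancel]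
  rw [hclosed _ htk _ _ (by omega) him (by omega) (by omega),
    hclosed _ htk _ _ (by omega) (by omega) (by omega) (by omega),
    hclosed _ (by omega) _ _ (by omega) him (by omega) (by omega),
    hclosed _ (by omega) _ _ (by omega) (by omega) (by omega) (by omega),
    diagPathCost_add_one_left_sub_shift _ _ (prependSeq_add_one_add_one b c s) hij.le]
  have hlow : prependSeq b c s p ≤ a (p + 1) :=
    le_of_monotoneOn_of_antitoneOn ha (hβ s (by omega)) (hβa s) ⟨by omega, him⟩
      ⟨by omega, by omega⟩
  have hsq : (a (p + 1) - prependSeq b c s p) ^ 2 < (a p - prependSeq b c s p) ^ 2 :=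
    pow_lt_pow_left₀ (sub_lt_sub_right (hA p (by omega) (by omega)) _) (sub_nonneg.2 hlow)
      two_ne_zero
  intro h
  linarith

theorem stmt_16 (a b c : ℕ → ℝ) (m n k : ℕ) (hm : 2 ≤ m) (hn : 2 ≤ n) (hk : 1 ≤ k)
    (hA : ∀ i, 1 ≤ i → i < m → a (i + 1) < a i)
    (hB : ∀ j, 1 ≤ j → j < n → b j ≤ b (j + 1))
    (hAB : b n < a m)
    (hc : ∀ t, 1 ≤ t → t < k → c (t + 1) < c t)
    (hcb : c 1 < b 1)
    (Dt : ℕ → ℕ → ℕ → ℝ)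
    (hDt : ∀ t, t ≤ k →
      DTWTable a (fun j => if j ≤ t then c (t + 1 - j) else b (j - t)) m (n + t) (Dt t)) :
    ∀ t, 1 ≤ t → t ≤ k → ∀ i j, 2 ≤ i → i ≤ m → i < j → j ≤ n + t - 1 →
      Dt t i (j + 1) - Dt t (i - 1) (j + 1) ≠ Dt (t - 1) i j - Dt (t - 1) (i - 1) j :=
  stmt_16_general a b c m n k hn hA hB hAB hc hcb Dt hDt
end
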